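/- arXiv:1906.02570 — 5 statements merged into one kernel-verified Lean document; each statement's English description precedes it below -/
import Mathlib

section
/- For a random variable X with values in a finite set, let D⁺(X) = E(i_X − ln(#s(X)))⁺, where s(X) is the support of X. Then D⁺(X) ≤ 1/e. -/
open Finset Real Filter

def IsPMF {α : Type*} [Fintype α] (p : α → ℝ) : Prop :=
  (∀ x, 0 ≤ p x) ∧ ∑ x, p x = 1

noncomputable def inf' {α : Type*} (p : α → ℝ) (x : α) : ℝ := -Real.log (p x)

noncomputable def ent {α : Type*} [Fintype α] (p : α → ℝ) : ℝ :=
  ∑ x, p x * inf' p x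

noncomputable def Mfl {α : Type*} [Fintype α] (p : α → ℝ) (a : ℝ) : ℝ :=
  ∑ x, p x * |inf' p x - a|

noncomputable def Mpl {α : Type*} [Fintype α] (p : α → ℝ) (a : ℝ) : ℝ :=
  ∑ x, p x * max (inf' p x - a) 0

noncomputable def Mmi {α : Type*} [Fintype α] (p : α → ℝ) (a : ℝ) : ℝ :=
  ∑ x, p x * max (a - inf' p x) 0

open Classical in
noncomputable def dist' {Ω α : Type*} [Fintype Ω] (μ : Ω → ℝ) (X : Ω → α) : α → ℝ :=
  fun a => ∑ ω, if X ω = a then μ ω else 0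

noncomputable def entRV {Ω α : Type*} [Fintype Ω] [Fintype α] (μ : Ω → ℝ) (X : Ω → α) : ℝ :=
  ent (dist' μ X)

noncomputable def MRV {Ω α : Type*} [Fintype Ω] [Fintype α] (μ : Ω → ℝ) (X : Ω → α) : ℝ :=
  Mfl (dist' μ X) (entRV μ X)

noncomputable def infCond {Ω α β : Type*} [Fintype Ω] (μ : Ω → ℝ) (X : Ω → α) (Y : Ω → β) (ω : Ω) : ℝ :=
  inf' (dist' μ (fun ω => (X ω, Y ω))) (X ω, Y ω) - inf' (dist' μ Y) (Y ω)

noncomputable def entCond {Ω α β : Type*} [Fintype Ω] (μ : Ω → ℝ) (X : Ω → α) (Y : Ω → β) : ℝ :=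
  ∑ ω, μ ω * infCond μ X Y ω

noncomputable def MCond {Ω α β : Type*} [Fintype Ω] (μ : Ω → ℝ) (X : Ω → α) (Y : Ω → β) : ℝ :=
  ∑ ω, μ ω * |infCond μ X Y ω - entCond μ X Y|

open Classical in
noncomputable def propOf {γ : Type*} [Fintype γ] (P : γ → Prop) : ℝ :=
  ((Finset.univ.filter P).card : ℝ) / (Fintype.card γ : ℝ)

open Classical in
noncomputable def suppCard {α : Type*} [Fintype α] (p : α → ℝ) : ℕ :=
  (Finset.univ.filter (fun x => p x ≠ 0)).card


lemma aux_neg_mul_log {t : ℝ} (ht : 0 < t) : -(t * Real.log t) ≤ (Real.exp 1)⁻¹ := by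
  have he : (0:ℝ) < Real.exp 1 := Real.exp_pos 1
  have hpos : 0 < (t * Real.exp 1)⁻¹ := by positivity
  have h := Real.log_le_sub_one_of_pos hpos
  rw [Real.log_inv, Real.log_mul (ne_of_gt ht) (ne_of_gt he), Real.log_exp] at h
  -- h : -(log t + 1) ≤ (t * e)⁻¹ - 1
  have h2 : -Real.log t ≤ (t * Real.exp 1)⁻¹ := by linarith
  have h3 : t * (-Real.log t) ≤ t * (t * Real.exp 1)⁻¹ :=
    mul_le_mul_of_nonneg_left h2 ht.le
  have h4 : t * (t * Real.exp 1)⁻¹ = (Real.exp 1)⁻¹ := by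
    field_simp
  nlinarith [h3, h4]

open Classical in
lemma aux_pmf_dist {Ω α : Type*} [Fintype Ω] [Fintype α] (μ : Ω → ℝ) (hμ : IsPMF μ)
    (X : Ω → α) : IsPMF (dist' μ X) := by
  constructor
  · intro a
    apply Finset.sum_nonneg
    intro ω _
    split
    · exact hμ.1 ω
    · exact le_rfl
  · rw [← hμ.2]
    unfold dist'
    rw [Finset.sum_comm]
    apply Finset.sum_congr rfl
    intro ω _
    simp

open Classical in
lemma aux_main {α : Type*} [Fintype α] (p : α → ℝ) (hp : IsPMF p) :
    Mpl p (Real.log (suppCard p)) ≤ (Real.exp 1)⁻¹ := by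
  set S := Finset.univ.filter (fun x => p x ≠ 0) with hS
  have hN : (suppCard p : ℝ) = (S.card : ℝ) := by rfl
  have hSne : S.Nonempty := by
    by_contra h
    rw [Finset.not_nonempty_iff_eq_empty] at h
    have : ∑ x, p x = 0 := by
      apply Finset.sum_eq_zero
      intro x _
      by_contra hx
      have : x ∈ S := by simp [hS, hx]
      simp [h] at this
    rw [hp.2] at this
    norm_num at this
  have hNpos : (0:ℝ) < (S.card : ℝ) := by
    exact_mod_cast Finset.card_pos.mpr hSne
  set N : ℝ := (S.card : ℝ) with hNdef
  unfold Mpl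
  have hsum : ∑ x, p x * max (_root_.inf' p x - Real.log (suppCard p)) 0
      = ∑ x ∈ S, p x * max (_root_.inf' p x - Real.log (suppCard p)) 0 := by
    symm
    apply Finset.sum_subset (Finset.subset_univ S)
    intro x _ hx
    simp [hS] at hx
    simp [hx]
  rw [hsum]
  have hterm : ∀ x ∈ S, p x * max (_root_.inf' p x - Real.log (suppCard p)) 0
      ≤ N⁻¹ * (Real.exp 1)⁻¹ := by
    intro x hx
    have hpx : 0 < p x := by
      rcases lt_or_eq_of_le (hp.1 x) with h | h
      · exact h
      · simp [hS] at hx; exact absurd h.symm hx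
    rcases le_or_gt (inf' p x - Real.log (suppCard p)) 0 with h | h
    · rw [max_eq_right h]
      have : (0:ℝ) ≤ N⁻¹ * (Real.exp 1)⁻¹ := by positivity
      simpa using this
    · rw [max_eq_left h.le]
      have hlog : Real.log (suppCard p) = Real.log N := by rw [hN]
      have key : p x * (inf' p x - Real.log (suppCard p))
          = N⁻¹ * (-(N * p x * Real.log (N * p x))) := by
        rw [hlog]
        unfold _root_.inf'
        rw [Real.log_mul (ne_of_gt hNpos) (ne_of_gt hpx)]
        field_simp
        ring
      rw [key]
      have := aux_neg_mul_log (t := N * p x) (by positivity)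
      have hNi : (0:ℝ) ≤ N⁻¹ := by positivity
      exact mul_le_mul_of_nonneg_left this hNi
  calc ∑ x ∈ S, p x * max (_root_.inf' p x - Real.log (suppCard p)) 0
      ≤ ∑ x ∈ S, N⁻¹ * (Real.exp 1)⁻¹ := Finset.sum_le_sum hterm
    _ = S.card * (N⁻¹ * (Real.exp 1)⁻¹) := by rw [Finset.sum_const, nsmul_eq_mul]
    _ = (Real.exp 1)⁻¹ := by
        rw [hNdef] at hNpos ⊢
        field_simp

theorem stmt2 {Ω α : Type*} [Fintype Ω] [Fintype α] (μ : Ω → ℝ) (hμ : IsPMF μ)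
    (X : Ω → α) :
    Mpl (dist' μ X) (Real.log (suppCard (dist' μ X))) ≤ (Real.exp 1)⁻¹ := by
  exact aux_main _ (aux_pmf_dist μ hμ X)
end

section
/- Let P = (1−ε)P' + εP'' be a convex combination of discrete probability measures on the same finite set with ε ∈ (0,1). Then M(P) ≤ 2ε(H(P'') + 2H(P')) + 2M(P') + 10 ln 2. -/
open Finset Real Filter

section MyAux

variable {α : Type*} [Fintype α]

lemma myPmfLeOne (p : α → ℝ) (hp : IsPMF p) (x : α) : p x ≤ 1 := by
  rw [← hp.2]
  exact Finset.single_le_sum (fun i _ => hp.1 i) (Finset.mem_univ x)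

lemma myInfNonneg (p : α → ℝ) (hp : IsPMF p) (x : α) : 0 ≤ inf' p x := by
  rcases eq_or_ne (p x) 0 with h | h
  · simp [_root_.inf', h]
  · simp only [_root_.inf', neg_nonneg]
    exact Real.log_nonpos (hp.1 x) (myPmfLeOne p hp x)

lemma myEntNonneg (p : α → ℝ) (hp : IsPMF p) : 0 ≤ ent p :=
  Finset.sum_nonneg fun x _ => mul_nonneg (hp.1 x) (myInfNonneg p hp x)

/-- Gibbs' inequality / nonnegativity of KL. -/
lemma myGibbs (q r : α → ℝ) (hq : IsPMF q) (hr : ∀ x, 0 ≤ r x) (hr1 : ∑ x, r x ≤ 1)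
    (hpos : ∀ x, q x ≠ 0 → 0 < r x) : ent q ≤ ∑ x, q x * inf' r x := by
  have key : ∀ x, q x * Real.log (r x) - q x * Real.log (q x) ≤ r x - q x := by
    intro x
    rcases eq_or_ne (q x) 0 with h | h
    · simp [h, hr x]
    · have hq0 : 0 < q x := lt_of_le_of_ne (hq.1 x) (Ne.symm h)
      have hr0 : 0 < r x := hpos x h
      have hlog : Real.log (r x / q x) ≤ r x / q x - 1 :=
        Real.log_le_sub_one_of_pos (by positivity)
      rw [Real.log_div (ne_of_gt hr0) h] at hlog
      have := mul_le_mul_of_nonneg_left hlog (le_of_lt hq0)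
      have hdv : q x * (r x / q x - 1) = r x - q x := by field_simp
      nlinarith
  have hsum : ∑ x, (q x * Real.log (r x) - q x * Real.log (q x)) ≤ ∑ x, (r x - q x) :=
    Finset.sum_le_sum fun x _ => key x
  rw [Finset.sum_sub_distrib, Finset.sum_sub_distrib, hq.2] at hsum
  have h2 : ∑ x, q x * Real.log (r x) - ∑ x, q x * Real.log (q x) ≤ 0 := by linarith
  have e1 : ∑ x, q x * inf' r x = -∑ x, q x * Real.log (r x) := by
    simp [_root_.inf', mul_neg, Finset.sum_neg_distrib]
  have e2 : ent q = -∑ x, q x * Real.log (q x) := by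
    simp [ent, _root_.inf', mul_neg, Finset.sum_neg_distrib]
  rw [e1, e2]
  linarith

end MyAux

set_option maxHeartbeats 1000000 in
theorem stmt7 {α : Type*} [Fintype α] (P' P'' : α → ℝ) (hP' : IsPMF P') (hP'' : IsPMF P'')
    (ε : ℝ) (hε0 : 0 < ε) (hε1 : ε < 1)
    (P : α → ℝ) (hP : P = fun x => (1 - ε) * P' x + ε * P'' x) :
    Mfl P (ent P) ≤ 2 * ε * (ent P'' + 2 * ent P') + 2 * Mfl P' (ent P') + 10 * Real.log 2 := by
  obtain ⟨hP'0, hP's⟩ := hP'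
  obtain ⟨hP''0, hP''s⟩ := hP''
  have hε1' : (0:ℝ) < 1 - ε := by linarith
  have hln2 : (0:ℝ) ≤ Real.log 2 := Real.log_nonneg one_le_two
  set H' := ent P' with hH'def
  set H'' := ent P'' with hH''def
  set a := (1 - ε) * H' + ε * H'' with hadef
  have hH'nn : 0 ≤ H' := myEntNonneg P' ⟨hP'0, hP's⟩
  have hH''nn : 0 ≤ H'' := myEntNonneg P'' ⟨hP''0, hP''s⟩
  have hann : 0 ≤ a := by nlinarith
  have hPx : ∀ x, P x = (1 - ε) * P' x + ε * P'' x := fun x => by rw [hP]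
  have hPnn : ∀ x, 0 ≤ P x := by
    intro x; rw [hPx x]; have := hP'0 x; have := hP''0 x; nlinarith
  have hPs : ∑ x, P x = 1 := by
    calc ∑ x, P x = ∑ x, ((1 - ε) * P' x + ε * P'' x) := by
          exact Finset.sum_congr rfl fun x _ => hPx x
      _ = (1 - ε) * ∑ x, P' x + ε * ∑ x, P'' x := by
          rw [Finset.sum_add_distrib, Finset.mul_sum, Finset.mul_sum]
      _ = 1 := by rw [hP's, hP''s]; ring
  have hge' : ∀ x, (1 - ε) * P' x ≤ P x := by
    intro x; rw [hPx x]; nlinarith [hP''0 x]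
  have hge'' : ∀ x, ε * P'' x ≤ P x := by
    intro x; rw [hPx x]; nlinarith [hP'0 x]
  have hlog1ε : Real.log (1 - ε) ≤ 0 := Real.log_nonpos (le_of_lt hε1') (by linarith)
  have hlogε : Real.log ε ≤ 0 := Real.log_nonpos (le_of_lt hε0) (le_of_lt hε1)
  -- pointwise information bounds
  have hiP' : ∀ x, P' x ≠ 0 → inf' P x ≤ inf' P' x - Real.log (1 - ε) := by
    intro x hx
    have h0 : 0 < P' x := lt_of_le_of_ne (hP'0 x) (Ne.symm hx)
    have h2 : Real.log ((1 - ε) * P' x) ≤ Real.log (P x) :=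
      Real.log_le_log (by positivity) (hge' x)
    rw [Real.log_mul (ne_of_gt hε1') hx] at h2
    simp only [_root_.inf']; linarith
  have hiP'' : ∀ x, P'' x ≠ 0 → inf' P x ≤ inf' P'' x - Real.log ε := by
    intro x hx
    have h0 : 0 < P'' x := lt_of_le_of_ne (hP''0 x) (Ne.symm hx)
    have h2 : Real.log (ε * P'' x) ≤ Real.log (P x) :=
      Real.log_le_log (by positivity) (hge'' x)
    rw [Real.log_mul (ne_of_gt hε0) hx] at h2
    simp only [_root_.inf']; linarith
  -- entropy decomposition
  have hdecomp : ∀ g : α → ℝ, ∑ x, P x * g x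
      = (1 - ε) * ∑ x, P' x * g x + ε * ∑ x, P'' x * g x := by
    intro g
    calc ∑ x, P x * g x = ∑ x, ((1 - ε) * (P' x * g x) + ε * (P'' x * g x)) := by
          refine Finset.sum_congr rfl fun x _ => ?_
          rw [hPx x]; ring
      _ = (1 - ε) * ∑ x, P' x * g x + ε * ∑ x, P'' x * g x := by
          rw [Finset.sum_add_distrib, Finset.mul_sum, Finset.mul_sum]
  have hentdec : ent P = (1 - ε) * ∑ x, P' x * inf' P x + ε * ∑ x, P'' x * inf' P x :=
    hdecomp (fun x => inf' P x)
  -- cross entropy upper bounds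
  have hc1 : ∑ x, P' x * inf' P x ≤ H' - Real.log (1 - ε) := by
    have step : ∀ x, P' x * inf' P x ≤ P' x * (inf' P' x - Real.log (1 - ε)) := by
      intro x
      rcases eq_or_ne (P' x) 0 with h | h
      · simp [h]
      · exact mul_le_mul_of_nonneg_left (hiP' x h) (hP'0 x)
    calc ∑ x, P' x * inf' P x ≤ ∑ x, P' x * (inf' P' x - Real.log (1 - ε)) :=
          Finset.sum_le_sum fun x _ => step x
      _ = ∑ x, P' x * inf' P' x - (∑ x, P' x) * Real.log (1 - ε) := by
          rw [Finset.sum_mul, ← Finset.sum_sub_distrib]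
          exact Finset.sum_congr rfl fun x _ => by ring
      _ = H' - Real.log (1 - ε) := by rw [hP's, hH'def, ent]; ring
  have hc2 : ∑ x, P'' x * inf' P x ≤ H'' - Real.log ε := by
    have step : ∀ x, P'' x * inf' P x ≤ P'' x * (inf' P'' x - Real.log ε) := by
      intro x
      rcases eq_or_ne (P'' x) 0 with h | h
      · simp [h]
      · exact mul_le_mul_of_nonneg_left (hiP'' x h) (hP''0 x)
    calc ∑ x, P'' x * inf' P x ≤ ∑ x, P'' x * (inf' P'' x - Real.log ε) :=
          Finset.sum_le_sum fun x _ => step x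
      _ = ∑ x, P'' x * inf' P'' x - (∑ x, P'' x) * Real.log ε := by
          rw [Finset.sum_mul, ← Finset.sum_sub_distrib]
          exact Finset.sum_congr rfl fun x _ => by ring
      _ = H'' - Real.log ε := by rw [hP''s, hH''def, ent]; ring
  -- Gibbs lower bounds
  have hg1 : H' ≤ ∑ x, P' x * inf' P x := by
    refine myGibbs P' P ⟨hP'0, hP's⟩ hPnn (le_of_eq hPs) ?_
    intro x hx
    have h0 : 0 < P' x := lt_of_le_of_ne (hP'0 x) (Ne.symm hx)
    exact lt_of_lt_of_le (by positivity) (hge' x)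
  have hg2 : H'' ≤ ∑ x, P'' x * inf' P x := by
    refine myGibbs P'' P ⟨hP''0, hP''s⟩ hPnn (le_of_eq hPs) ?_
    intro x hx
    have h0 : 0 < P'' x := lt_of_le_of_ne (hP''0 x) (Ne.symm hx)
    exact lt_of_lt_of_le (by positivity) (hge'' x)
  -- binary entropy bound
  have hbin : (1 - ε) * (-Real.log (1 - ε)) + ε * (-Real.log ε) ≤ Real.log 2 := by
    have l1 : Real.log (1 / (2 * (1 - ε))) ≤ 1 / (2 * (1 - ε)) - 1 :=
      Real.log_le_sub_one_of_pos (by positivity)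
    have l2 : Real.log (1 / (2 * ε)) ≤ 1 / (2 * ε) - 1 :=
      Real.log_le_sub_one_of_pos (by positivity)
    have e1 : Real.log (1 / (2 * (1 - ε))) = -(Real.log 2 + Real.log (1 - ε)) := by
      rw [one_div, Real.log_inv, Real.log_mul two_ne_zero (ne_of_gt hε1')]
    have e2 : Real.log (1 / (2 * ε)) = -(Real.log 2 + Real.log ε) := by
      rw [one_div, Real.log_inv, Real.log_mul two_ne_zero (ne_of_gt hε0)]
    rw [e1] at l1; rw [e2] at l2
    have m1 : (1 - ε) * (-(Real.log 2 + Real.log (1 - ε))) ≤ (1 - ε) * (1 / (2 * (1 - ε)) - 1) :=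
      mul_le_mul_of_nonneg_left l1 (le_of_lt hε1')
    have m2 : ε * (-(Real.log 2 + Real.log ε)) ≤ ε * (1 / (2 * ε) - 1) :=
      mul_le_mul_of_nonneg_left l2 (le_of_lt hε0)
    have d1 : (1 - ε) * (1 / (2 * (1 - ε))) = 1 / 2 := by field_simp
    have d2 : ε * (1 / (2 * ε)) = 1 / 2 := by field_simp
    nlinarith
  -- entropy bounds for the mixture
  have hbelow : a ≤ ent P := by rw [hentdec]; nlinarith
  have habove : ent P ≤ a + Real.log 2 := by rw [hentdec]; nlinarith
  -- main estimate
  set f : α → ℝ := fun x => max (inf' P x - a) 0 with hfdef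
  have hClaimA : Mfl P (ent P) ≤ 2 * (∑ x, P x * f x) + Real.log 2 := by
    have hpt : ∀ x, |inf' P x - ent P| ≤ f x + (max (a - inf' P x) 0 + Real.log 2) := by
      intro x
      have l1 : inf' P x - a ≤ f x := le_max_left _ _
      have l2 : (0:ℝ) ≤ f x := le_max_right _ _
      have l3 : a - inf' P x ≤ max (a - inf' P x) 0 := le_max_left _ _
      have l4 : (0:ℝ) ≤ max (a - inf' P x) 0 := le_max_right _ _
      rw [abs_le]; constructor <;> [skip; skip] <;> linarith
    have step1 : Mfl P (ent P) ≤ ∑ x, P x * (f x + (max (a - inf' P x) 0 + Real.log 2)) :=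
      Finset.sum_le_sum fun x _ => mul_le_mul_of_nonneg_left (hpt x) (hPnn x)
    have expand : ∑ x, P x * (f x + (max (a - inf' P x) 0 + Real.log 2))
        = ∑ x, P x * f x + (∑ x, P x * max (a - inf' P x) 0 + Real.log 2) := by
      calc ∑ x, P x * (f x + (max (a - inf' P x) 0 + Real.log 2))
          = ∑ x, (P x * f x + (P x * max (a - inf' P x) 0 + P x * Real.log 2)) :=
            Finset.sum_congr rfl fun x _ => by ring
        _ = ∑ x, P x * f x + (∑ x, P x * max (a - inf' P x) 0 + (∑ x, P x) * Real.log 2) := by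
            rw [Finset.sum_add_distrib, Finset.sum_add_distrib, Finset.sum_mul]
        _ = ∑ x, P x * f x + (∑ x, P x * max (a - inf' P x) 0 + Real.log 2) := by
            rw [hPs]; ring
    have hflip : ∑ x, P x * max (a - inf' P x) 0 ≤ ∑ x, P x * f x := by
      have hid : ∀ x, max (a - inf' P x) 0 = f x - (inf' P x - a) := by
        intro x
        rcases le_total (inf' P x) a with h | h
        · rw [max_eq_left (by linarith), hfdef]
          simp only
          rw [max_eq_right (by linarith)]; ring
        · rw [max_eq_right (by linarith), hfdef]
          simp only
          rw [max_eq_left (by linarith)]; ring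
      have e3 : ∑ x, P x * max (a - inf' P x) 0
          = ∑ x, P x * f x - (ent P - a) := by
        calc ∑ x, P x * max (a - inf' P x) 0
            = ∑ x, (P x * f x - (P x * inf' P x - P x * a)) := by
              refine Finset.sum_congr rfl fun x _ => ?_
              rw [hid x]; ring
          _ = ∑ x, P x * f x - (∑ x, P x * inf' P x - (∑ x, P x) * a) := by
              rw [Finset.sum_sub_distrib, Finset.sum_sub_distrib, Finset.sum_mul]
          _ = ∑ x, P x * f x - (ent P - a) := by rw [hPs, ent]; ring
      rw [e3]; linarith
    calc Mfl P (ent P) ≤ ∑ x, P x * (f x + (max (a - inf' P x) 0 + Real.log 2)) := step1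
      _ = ∑ x, P x * f x + (∑ x, P x * max (a - inf' P x) 0 + Real.log 2) := expand
      _ ≤ 2 * (∑ x, P x * f x) + Real.log 2 := by linarith
  -- P' part
  have hM'half : ∑ x, P' x * max (inf' P' x - H') 0 = Mfl P' H' / 2 := by
    have hsum0 : ∑ x, P' x * (inf' P' x - H') = 0 := by
      have : ∑ x, P' x * (inf' P' x - H')
          = ∑ x, P' x * inf' P' x - (∑ x, P' x) * H' := by
        rw [Finset.sum_mul, ← Finset.sum_sub_distrib]
        exact Finset.sum_congr rfl fun x _ => by ring
      rw [this, hP's, hH'def, ent]; ring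
    have habs : Mfl P' H'
        = ∑ x, (2 * (P' x * max (inf' P' x - H') 0) - P' x * (inf' P' x - H')) := by
      unfold Mfl
      refine Finset.sum_congr rfl fun x _ => ?_
      rcases le_total (inf' P' x) H' with h | h
      · rw [abs_of_nonpos (by linarith), max_eq_right (by linarith)]; ring
      · rw [abs_of_nonneg (by linarith), max_eq_left (by linarith)]; ring
    rw [Finset.sum_sub_distrib, hsum0, ← Finset.mul_sum] at habs
    linarith
  have hC : ∑ x, P' x * f x ≤ Mfl P' H' / 2 + ε * H' + (-Real.log (1 - ε)) := by
    have step : ∀ x, P' x * f x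
        ≤ P' x * (max (inf' P' x - H') 0 + (ε * H' + (-Real.log (1 - ε)))) := by
      intro x
      rcases eq_or_ne (P' x) 0 with h | h
      · have : f x ≥ 0 := le_max_right _ _
        simp [h]
      · refine mul_le_mul_of_nonneg_left ?_ (hP'0 x)
        have hb := hiP' x h
        have hc : ε * H'' ≥ 0 := by positivity
        have hcH' : (0:ℝ) ≤ ε * H' := by positivity
        refine max_le ?_ ?_
        · have : inf' P' x - H' ≤ max (inf' P' x - H') 0 := le_max_left _ _
          simp only [hadef] at *
          linarith
        · have : (0:ℝ) ≤ max (inf' P' x - H') 0 := le_max_right _ _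
          linarith
    calc ∑ x, P' x * f x
        ≤ ∑ x, P' x * (max (inf' P' x - H') 0 + (ε * H' + (-Real.log (1 - ε)))) :=
          Finset.sum_le_sum fun x _ => step x
      _ = ∑ x, P' x * max (inf' P' x - H') 0
            + (∑ x, P' x) * (ε * H' + (-Real.log (1 - ε))) := by
          rw [Finset.sum_mul, ← Finset.sum_add_distrib]
          exact Finset.sum_congr rfl fun x _ => by ring
      _ = Mfl P' H' / 2 + ε * H' + (-Real.log (1 - ε)) := by
          rw [hM'half, hP's]; ring
  -- P'' part
  have hF : ∑ x, P'' x * f x ≤ H'' + (-Real.log ε) := by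
    have step : ∀ x, P'' x * f x ≤ P'' x * (inf' P'' x + (-Real.log ε)) := by
      intro x
      rcases eq_or_ne (P'' x) 0 with h | h
      · simp [h]
      · refine mul_le_mul_of_nonneg_left ?_ (hP''0 x)
        have hb := hiP'' x h
        have hi'' : 0 ≤ inf' P'' x := myInfNonneg P'' ⟨hP''0, hP''s⟩ x
        refine max_le (by linarith) (by linarith)
    calc ∑ x, P'' x * f x ≤ ∑ x, P'' x * (inf' P'' x + (-Real.log ε)) :=
          Finset.sum_le_sum fun x _ => step x
      _ = ∑ x, P'' x * inf' P'' x + (∑ x, P'' x) * (-Real.log ε) := by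
          rw [Finset.sum_mul, ← Finset.sum_add_distrib]
          exact Finset.sum_congr rfl fun x _ => by ring
      _ = H'' + (-Real.log ε) := by rw [hP''s, hH''def, ent]; ring
  -- combine
  have hB : ∑ x, P x * f x = (1 - ε) * ∑ x, P' x * f x + ε * ∑ x, P'' x * f x :=
    hdecomp f
  have hM'nn : 0 ≤ Mfl P' H' := by
    unfold Mfl
    exact Finset.sum_nonneg fun x _ => mul_nonneg (hP'0 x) (abs_nonneg _)
  have hfin1 : (1 - ε) * ∑ x, P' x * f x
      ≤ (1 - ε) * (Mfl P' H' / 2 + ε * H' + (-Real.log (1 - ε))) :=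
    mul_le_mul_of_nonneg_left hC (le_of_lt hε1')
  have hfin2 : ε * ∑ x, P'' x * f x ≤ ε * (H'' + (-Real.log ε)) :=
    mul_le_mul_of_nonneg_left hF (le_of_lt hε0)
  nlinarith [hClaimA, hB, hfin1, hfin2, hbin, mul_nonneg (le_of_lt hε0) hH'nn,
    mul_nonneg (le_of_lt hε0) hM'nn]
end

section
/- Let P = (1−ε)P' + εP'' be a convex combination of discrete probability measures on the same finite set with ε ∈ (0,1). Then M(P) ≤ 2(ε·H(P) + ln 2 + Σ_x P(x)·(H(P) − i_{P'}(x))⁺), where i_{P'}(x) = −ln P'(x) and the sum is over x in the support of P' (with (H(P) + ln P'(x))⁺ interpreted as 0 when P'(x) = 0). -/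
open Finset Real Filter

open Classical in
theorem stmt8 {α : Type*} [Fintype α] (P' P'' : α → ℝ) (hP' : IsPMF P') (hP'' : IsPMF P'')
    (ε : ℝ) (hε0 : 0 < ε) (hε1 : ε < 1)
    (P : α → ℝ) (hP : P = fun x => (1 - ε) * P' x + ε * P'' x) :
    Mfl P (ent P) ≤
      2 * (ε * ent P + Real.log 2 +
        ∑ x ∈ Finset.univ.filter (fun x => P' x ≠ 0), P x * max (ent P - inf' P' x) 0) := by
  obtain ⟨hP'0, hP'1⟩ := hP'
  obtain ⟨hP''0, hP''1⟩ := hP''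
  have hε1' : 0 < 1 - ε := by linarith
  have hP0 : ∀ x, 0 ≤ P x := by
    intro x; rw [hP]
    have := hP'0 x; have := hP''0 x
    positivity
  have hPsum : ∑ x, P x = 1 := by
    rw [hP]
    rw [Finset.sum_add_distrib, ← Finset.mul_sum, ← Finset.mul_sum, hP'1, hP''1]
    ring
  have hPle1 : ∀ x, P x ≤ 1 := fun x =>
    hPsum ▸ Finset.single_le_sum (fun i _ => hP0 i) (Finset.mem_univ x)
  set H := ent P with hH
  have hH0 : 0 ≤ H := by
    apply Finset.sum_nonneg
    intro x _
    refine mul_nonneg (hP0 x) ?_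
    show (0:ℝ) ≤ -Real.log (P x)
    simpa using Real.log_nonpos (hP0 x) (hPle1 x)
  set T : α → ℝ := fun x => max (H + Real.log (P x)) 0 with hTdef
  have hT0 : ∀ x, 0 ≤ T x := fun x => le_max_right _ _
  have hTle : ∀ x, T x ≤ H := by
    intro x
    apply max_le _ hH0
    have := Real.log_nonpos (hP0 x) (hPle1 x)
    linarith
  set s := Finset.univ.filter (fun x => P' x ≠ 0) with hs
  set S := ∑ x ∈ s, P x * max (H - inf' P' x) 0 with hSdef
  -- Step 1 : Mfl P H = 2 * ∑ x, P x * T x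
  have habs : ∀ a : ℝ, |a - H| = (a - H) + 2 * max (H - a) 0 := by
    intro a
    rcases le_total a H with h | h
    · rw [abs_of_nonpos (by linarith), max_eq_left (by linarith)]; ring
    · rw [abs_of_nonneg (by linarith), max_eq_right (by linarith)]; ring
  have step1 : Mfl P H = 2 * ∑ x, P x * T x := by
    unfold Mfl
    have : ∀ x : α, P x * |inf' P x - H| =
        P x * inf' P x - P x * H + 2 * (P x * T x) := by
      intro x
      rw [habs]
      have : max (H - inf' P x) 0 = T x := by
        show max (H - _root_.inf' P x) 0 = max (H + Real.log (P x)) 0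
        simp only [_root_.inf', sub_neg_eq_add]
      rw [this]; ring
    rw [Finset.sum_congr rfl (fun x _ => this x)]
    rw [Finset.sum_add_distrib, Finset.sum_sub_distrib, ← Finset.sum_mul, hPsum,
      ← Finset.mul_sum]
    have : ∑ x, P x * inf' P x = H := rfl
    rw [this]; ring
  -- key bound
  have hsplit : ∑ x, P x * T x =
      ∑ x, (1 - ε) * P' x * T x + ∑ x, ε * P'' x * T x := by
    rw [← Finset.sum_add_distrib]
    apply Finset.sum_congr rfl
    intro x _
    rw [hP]; ring
  have h2 : ∑ x, ε * P'' x * T x ≤ ε * H := by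
    calc ∑ x, ε * P'' x * T x ≤ ∑ x, ε * P'' x * H := by
          apply Finset.sum_le_sum
          intro x _
          exact mul_le_mul_of_nonneg_left (hTle x)
            (mul_nonneg hε0.le (hP''0 x))
      _ = ε * H := by
          have : ∑ x, ε * P'' x * H = ε * H * ∑ x, P'' x := by
            rw [Finset.mul_sum]
            exact Finset.sum_congr rfl fun x _ => by ring
          rw [this, hP''1]; ring
  -- restrict first sum to the support of P'
  have h1supp : ∑ x, (1 - ε) * P' x * T x = ∑ x ∈ s, (1 - ε) * P' x * T x := by
    symm
    apply Finset.sum_subset (Finset.filter_subset _ _)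
    intro x _ hx
    have : P' x = 0 := by simpa [hs] using hx
    rw [this]; ring
  -- pointwise bound on the support
  have hpt : ∀ x ∈ s, (1 - ε) * P' x * T x ≤
      P x * max (H - inf' P' x) 0 + (P' x * Real.log 2 + (P x - P' x) / 2) := by
    intro x hx
    have hP'pos : 0 < P' x := (hP'0 x).lt_of_ne (Ne.symm ((Finset.mem_filter.mp hx).2))
    have hPpos : 0 < P x := by
      rw [hP]
      dsimp only
      nlinarith [hP''0 x]
    set a := H - inf' P' x with ha
    have ha' : a = H + Real.log (P' x) := by
      simp only [ha, _root_.inf', sub_neg_eq_add]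
    set t := (P x + P' x) / P' x with ht
    have ht1 : 1 ≤ t := by
      rw [ht, le_div_iff₀ hP'pos]
      linarith
    have htpos : 0 < t := lt_of_lt_of_le one_pos ht1
    have hb0 : 0 ≤ Real.log t := Real.log_nonneg ht1
    -- log (P x) ≤ log (P' x) + log t
    have hlog : Real.log (P x) ≤ Real.log (P' x) + Real.log t := by
      have : Real.log (P x) - Real.log (P' x) = Real.log (P x / P' x) :=
        (Real.log_div hPpos.ne' hP'pos.ne').symm
      have hle : Real.log (P x / P' x) ≤ Real.log t := by
        apply Real.log_le_log (by positivity)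
        rw [ht, div_le_div_iff₀ hP'pos hP'pos]
        nlinarith
      linarith
    have hTb : T x ≤ max a 0 + Real.log t := by
      apply max_le
      · have : H + Real.log (P x) ≤ a + Real.log t := by rw [ha']; linarith
        calc H + Real.log (P x) ≤ a + Real.log t := this
          _ ≤ max a 0 + Real.log t := by gcongr; exact le_max_left _ _
      · positivity
    -- tangent line: log t ≤ log 2 + (t - 2)/2
    have htang : Real.log t ≤ Real.log 2 + (t - 2) / 2 := by
      have h := Real.log_le_sub_one_of_pos (show (0:ℝ) < t / 2 by positivity)
      rw [Real.log_div htpos.ne' (by norm_num)] at h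
      linarith
    have hstep : (1 - ε) * P' x * T x ≤ P x * max a 0 + P' x * Real.log t := by
      calc (1 - ε) * P' x * T x ≤ (1 - ε) * P' x * (max a 0 + Real.log t) := by
            apply mul_le_mul_of_nonneg_left hTb
            positivity
        _ = (1 - ε) * P' x * max a 0 + (1 - ε) * P' x * Real.log t := by ring
        _ ≤ P x * max a 0 + P' x * Real.log t := by
            have hA : (1 - ε) * P' x ≤ P x := by
              rw [hP]; dsimp only; nlinarith [hP''0 x]
            have hB : (1 - ε) * P' x ≤ P' x := by nlinarith
            exact add_le_add (mul_le_mul_of_nonneg_right hA (le_max_right _ _))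
              (mul_le_mul_of_nonneg_right hB hb0)
    calc (1 - ε) * P' x * T x ≤ P x * max a 0 + P' x * Real.log t := hstep
      _ ≤ P x * max a 0 + P' x * (Real.log 2 + (t - 2) / 2) := by
          gcongr
      _ = P x * max a 0 + (P' x * Real.log 2 + (P x - P' x) / 2) := by
          rw [ht]; field_simp; ring
  -- summing up
  have hsumP' : ∑ x ∈ s, P' x = 1 := by
    rw [← hP'1]
    apply Finset.sum_subset (Finset.filter_subset _ _)
    intro x _ hx
    simpa [hs] using hx
  have hsumPs : ∑ x ∈ s, P x ≤ 1 := by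
    rw [← hPsum]
    exact Finset.sum_le_sum_of_subset_of_nonneg (Finset.filter_subset _ _)
      (fun x _ _ => hP0 x)
  have h1 : ∑ x ∈ s, (1 - ε) * P' x * T x ≤ S + Real.log 2 := by
    calc ∑ x ∈ s, (1 - ε) * P' x * T x
        ≤ ∑ x ∈ s, (P x * max (H - inf' P' x) 0 + (P' x * Real.log 2 + (P x - P' x) / 2)) :=
          Finset.sum_le_sum hpt
      _ = S + (Real.log 2 * ∑ x ∈ s, P' x + ((∑ x ∈ s, P x) - ∑ x ∈ s, P' x) / 2) := by
          rw [hSdef, Finset.mul_sum, ← Finset.sum_sub_distrib, Finset.sum_div,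
            ← Finset.sum_add_distrib, ← Finset.sum_add_distrib]
          exact Finset.sum_congr rfl fun x _ => by ring
      _ ≤ S + Real.log 2 := by
          rw [hsumP']
          have : ((∑ x ∈ s, P x) - 1) / 2 ≤ 0 := by linarith
          linarith
  have key : ∑ x, P x * T x ≤ ε * H + Real.log 2 + S := by
    rw [hsplit, h1supp]
    linarith
  rw [step1]
  linarith
end

section
/- Let (X_i)_{i∈N} be an i.i.d. process with values in a finite set, with H(X_1) > 0. Then the relative index of uniformity D(X_1^n)/H(X_1^n) converges to (ln(#s(X_1)) − H(X_1))/H(X_1) as n → ∞, where s(X_1) is the support of X_1. In particular, it converges to 0 if and only if X_1 is uniform on its support. -/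
open Finset Real Filter

/-- Law of `n` i.i.d. copies of `p`. -/
noncomputable def iidDist {α : Type*} (p : α → ℝ) (n : ℕ) : (Fin n → α) → ℝ :=
  fun v => ∏ i, p (v i)

/-!
Write `N = #s(p)` and `H = ent p`. Splitting `|t| = -t + 2 max t 0` gives, for any law `q`,
`Mfl q (log #s(q)) = (log #s(q) - ent q) + 2 Mpl q (log #s(q))`, and the positive part
`Mpl q (log #s(q))` is at most `1/e` because `-y log y ≤ 1/e`. For `n` i.i.d. copies the support
has `Nⁿ` points and the entropy is `n H`, so the ratio is `(log N - H) / H + O(1/n)`. The limit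
vanishes iff `H = log N`, and `N (log N - H) = ∑_{x ∈ s(p)} klFun (N p(x))` with `klFun ≥ 0`
vanishing only at `1`, which is uniformity on the support.
-/

lemma neg_log_le_exp_neg_one_div {t : ℝ} (ht : 0 < t) : -log t ≤ exp (-1) / t := by
  have h := add_one_le_exp (-log t - 1)
  rw [exp_sub, exp_neg, exp_log ht] at h
  calc -log t = -log t - 1 + 1 := by ring
    _ ≤ t⁻¹ / exp 1 := h
    _ = exp (-1) / t := by rw [exp_neg]; ring

section Entropy

variable {α β : Type*} [Fintype α] [Fintype β]

open InformationTheory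

lemma ent_eq_sum_negMulLog (p : α → ℝ) : ent p = ∑ x, negMulLog (p x) := by
  simp [ent, _root_.inf', negMulLog]

open Classical in
lemma sum_mul_eq_sum_filter_ne_zero (p g : α → ℝ) :
    ∑ x, p x * g x = ∑ x ∈ univ.filter (p · ≠ 0), p x * g x :=
  (sum_filter_of_ne fun _ _ h => left_ne_zero_of_mul h).symm

open Classical in
lemma suppCard_pos {p : α → ℝ} (hp : IsPMF p) : 0 < suppCard p := by
  obtain ⟨x, -, hx⟩ := exists_ne_zero_of_sum_ne_zero (hp.2.symm ▸ one_ne_zero : ∑ x, p x ≠ 0)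
  exact card_pos.2 ⟨x, mem_filter.2 ⟨mem_univ x, hx⟩⟩

lemma ent_mul_prod (p : α → ℝ) (q : β → ℝ) (hp : ∑ x, p x = 1) (hq : ∑ y, q y = 1) :
    ent (fun z : α × β => p z.1 * q z.2) = ent p + ent q := by
  simp only [ent_eq_sum_negMulLog, Fintype.sum_prod_type, negMulLog_mul, sum_add_distrib,
    ← mul_sum, ← sum_mul, hp, hq, one_mul]

lemma Mfl_eq_sub_ent_add_two_mul_Mpl (q : α → ℝ) (hq : ∑ x, q x = 1) (a : ℝ) :
    Mfl q a = (a - ent q) + 2 * Mpl q a := by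
  have habs (t : ℝ) : |t| = -t + 2 * max t 0 := by
    linarith [max_zero_add_max_neg_zero_eq_abs_self t, max_zero_sub_max_neg_zero_eq_self t]
  simp only [Mfl, Mpl, ent, habs, mul_add, sum_add_distrib, mul_left_comm _ (2 : ℝ), ← mul_sum,
    mul_neg, mul_sub, sum_neg_distrib, sum_sub_distrib, ← sum_mul, hq]
  ring

open Classical in
lemma suppCard_mul_log_sub_ent_eq_sum_klFun {p : α → ℝ} (hp : IsPMF p) :
    suppCard p * (log (suppCard p) - ent p) =
      ∑ x ∈ univ.filter (p · ≠ 0), klFun (p x * suppCard p) := by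
  set N : ℝ := (suppCard p : ℝ)
  have hN : N ≠ 0 := Nat.cast_ne_zero.2 (suppCard_pos hp).ne'
  have hsum : ∑ x ∈ univ.filter (p · ≠ 0), p x = 1 := by rw [sum_filter_ne_zero, hp.2]
  have hent : ent p = ∑ x ∈ univ.filter (p · ≠ 0), p x * -log (p x) :=
    sum_mul_eq_sum_filter_ne_zero _ _
  have hterm : ∀ x ∈ univ.filter (p · ≠ 0),
      klFun (p x * N) = N * (p x * log (p x)) + N * log N * p x + 1 - N * p x := by
    intro x hx
    rw [klFun, log_mul (mem_filter.1 hx).2 hN]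
    ring
  have hcard : ((univ.filter (p · ≠ 0)).card : ℝ) = N := rfl
  rw [sum_congr rfl hterm, hent]
  simp only [sum_sub_distrib, sum_add_distrib, ← mul_sum, sum_const, nsmul_eq_mul, hcard, hsum,
    mul_neg, sum_neg_distrib]
  ring

lemma ent_eq_log_suppCard_iff {p : α → ℝ} (hp : IsPMF p) :
    ent p = log (suppCard p) ↔ ∀ x, p x ≠ 0 → p x = 1 / suppCard p := by
  classical
  have hN : (suppCard p : ℝ) ≠ 0 := Nat.cast_ne_zero.2 (suppCard_pos hp).ne'
  have hkl := suppCard_mul_log_sub_ent_eq_sum_klFun hp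
  rw [eq_comm, ← sub_eq_zero, ← mul_eq_zero_iff_left hN, hkl,
    sum_eq_zero_iff_of_nonneg fun x _ => klFun_nonneg (mul_nonneg (hp.1 x) (Nat.cast_nonneg _))]
  simp only [mem_filter, mem_univ, true_and,
    klFun_eq_zero_iff (mul_nonneg (hp.1 _) (Nat.cast_nonneg _)), eq_div_iff hN]

lemma Mpl_nonneg {q : α → ℝ} (hq : ∀ x, 0 ≤ q x) (a : ℝ) : 0 ≤ Mpl q a :=
  sum_nonneg fun x _ => mul_nonneg (hq x) (le_max_right _ _)

open Classical in
lemma Mpl_log_suppCard_le {q : α → ℝ} (hq : IsPMF q) : Mpl q (log (suppCard q)) ≤ exp (-1) := by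
  set N : ℝ := (suppCard q : ℝ)
  have hN : 0 < N := Nat.cast_pos.2 (suppCard_pos hq)
  have hterm : ∀ x ∈ univ.filter (q · ≠ 0), q x * max (inf' q x - log N) 0 ≤ exp (-1) / N := by
    intro x hx
    have hqx : 0 < q x := (hq.1 x).lt_of_ne' (mem_filter.1 hx).2
    have hlog : inf' q x - log N = -log (q x * N) := by
      rw [_root_.inf', log_mul hqx.ne' hN.ne']
      ring
    calc q x * max (inf' q x - log N) 0 ≤ q x * (exp (-1) / (q x * N)) := by
          rw [hlog]
          gcongr
          exact max_le (neg_log_le_exp_neg_one_div (by positivity)) (by positivity)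
      _ = exp (-1) / N := by field_simp
  calc Mpl q (log N) = ∑ x ∈ univ.filter (q · ≠ 0), q x * max (inf' q x - log N) 0 :=
        sum_mul_eq_sum_filter_ne_zero _ _
    _ ≤ ∑ _x ∈ univ.filter (q · ≠ 0), exp (-1) / N := sum_le_sum hterm
    _ = exp (-1) := by
        rw [sum_const, nsmul_eq_mul]
        exact mul_div_cancel₀ _ hN.ne'

end Entropy

section IID

variable {α : Type*}

lemma iidDist_nonneg {p : α → ℝ} (hp : ∀ x, 0 ≤ p x) (n : ℕ) (v : Fin n → α) :
    0 ≤ iidDist p n v :=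
  prod_nonneg fun i _ => hp (v i)

lemma sum_iidDist [Fintype α] {p : α → ℝ} (hp : ∑ x, p x = 1) (n : ℕ) :
    ∑ v, iidDist p n v = 1 := by
  simp only [iidDist]
  rw [← Fintype.sum_pow, hp, one_pow]

lemma isPMF_iidDist [Fintype α] {p : α → ℝ} (hp : IsPMF p) (n : ℕ) : IsPMF (iidDist p n) :=
  ⟨iidDist_nonneg hp.1 n, sum_iidDist hp.2 n⟩

lemma iidDist_succ_consEquiv (p : α → ℝ) (n : ℕ) (z : α × (Fin n → α)) :
    iidDist p (n + 1) (Fin.consEquiv (fun _ => α) z) = p z.1 * iidDist p n z.2 := by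
  simp [iidDist, Fin.consEquiv, Fin.prod_univ_succ]

lemma ent_iidDist [Fintype α] {p : α → ℝ} (hp : ∑ x, p x = 1) (n : ℕ) :
    ent (iidDist p n) = n * ent p := by
  induction n with
  | zero => simp [ent_eq_sum_negMulLog, iidDist]
  | succ n ih =>
    rw [ent_eq_sum_negMulLog, ← Equiv.sum_comp (Fin.consEquiv fun _ => α)]
    simp only [iidDist_succ_consEquiv, ← ent_eq_sum_negMulLog]
    rw [ent_mul_prod p _ hp (sum_iidDist hp n), ih]
    push_cast
    ring

open Classical in
lemma suppCard_iidDist [Fintype α] (p : α → ℝ) (n : ℕ) :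
    suppCard (iidDist p n) = suppCard p ^ n := by
  have hsupp : univ.filter (iidDist p n · ≠ 0) =
      Fintype.piFinset fun _ => univ.filter (p · ≠ 0) := by
    ext v
    simp [iidDist, prod_ne_zero_iff]
  rw [suppCard, hsupp, Fintype.card_piFinset_const]
  rfl

lemma Mfl_iidDist_log_suppCard [Fintype α] {p : α → ℝ} (hp : IsPMF p) (n : ℕ) :
    Mfl (iidDist p n) (log (suppCard (iidDist p n))) =
      n * (log (suppCard p) - ent p) + 2 * Mpl (iidDist p n) (log (suppCard (iidDist p n))) := by
  rw [Mfl_eq_sub_ent_add_two_mul_Mpl _ (sum_iidDist hp.2 n), ent_iidDist hp.2,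
    suppCard_iidDist, Nat.cast_pow, log_pow]
  ring

lemma tendsto_Mfl_iidDist_div_ent [Fintype α] {p : α → ℝ} (hp : IsPMF p)
    (hH : 0 < ent p) :
    Tendsto (fun n => Mfl (iidDist p n) (log (suppCard (iidDist p n))) / ent (iidDist p n))
      atTop (nhds ((log (suppCard p) - ent p) / ent p)) := by
  have hc : Tendsto (fun n : ℕ => Mpl (iidDist p n) (log (suppCard (iidDist p n))) / n)
      atTop (nhds 0) :=
    tendsto_bdd_div_atTop_nhds_zero
      (.of_forall fun n => Mpl_nonneg (iidDist_nonneg hp.1 n) _)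
      (.of_forall fun n => Mpl_log_suppCard_le (isPMF_iidDist hp n)) tendsto_natCast_atTop_atTop
  have hlim := (hc.const_mul (2 / ent p)).const_add ((log (suppCard p) - ent p) / ent p)
  rw [mul_zero, add_zero] at hlim
  refine hlim.congr' ?_
  filter_upwards [eventually_ne_atTop 0] with n hn
  rw [Mfl_iidDist_log_suppCard hp, ent_iidDist hp.2]
  field_simp

end IID

theorem stmt11 {α : Type*} [Fintype α] (p : α → ℝ) (hp : IsPMF p) (hH : 0 < ent p) :
    Filter.Tendsto
      (fun n => Mfl (iidDist p n) (Real.log (suppCard (iidDist p n))) / ent (iidDist p n))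
      Filter.atTop (nhds ((Real.log (suppCard p) - ent p) / ent p)) ∧
    (Filter.Tendsto
        (fun n => Mfl (iidDist p n) (Real.log (suppCard (iidDist p n))) / ent (iidDist p n))
        Filter.atTop (nhds 0) ↔ ∀ x, p x ≠ 0 → p x = 1 / (suppCard p : ℝ)) := by
  have hlim := tendsto_Mfl_iidDist_div_ent hp hH
  refine ⟨hlim, ?_⟩
  rw [← ent_eq_log_suppCard_iff hp, eq_comm, ← sub_eq_zero, ← div_left_inj' hH.ne', zero_div]
  exact ⟨tendsto_nhds_unique hlim, fun h => h ▸ hlim⟩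
end

section
/- Let P be a sub-probability measure on a finite set X, let k ≥ 1 and ε > 0, and let q = max_{x∈X} P(x). Then the proportion of maps f : X → {1,…,k} such that P(f⁻¹(j)) ≤ (1+ε)/k for all j ∈ {1,…,k} is at least 1 − k·exp(−(ε/(2kq))·ln(1+ε)). -/
/-!
Fix a colour `j`. For uniformly random `f`, the mass `P (f⁻¹ j)` is a sum of independent
variables `P x * 1[f x = j]` with values in `[0, q]`. By convexity of `exp`, each factor of the
moment generating function at `t = log (1 + ε) / q` is at most
`1 + ε P x / (k q) ≤ exp (ε P x / (k q))`, so Chernoff's bound gives `P (f⁻¹ j) > (1 + ε) / k`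
with probability at most `exp ((ε - (1 + ε) log (1 + ε)) / (k q))`. The elementary inequality
`log (1 + ε) ≥ 2 ε / (2 + ε)` bounds this by `exp (-(ε / (2 k q)) log (1 + ε))`, and a union
bound over the `k` colours concludes.
-/

open Finset Real Filter

theorem Real.two_mul_div_two_add_le_log_one_add {x : ℝ} (hx : 0 ≤ x) :
    2 * x / (2 + x) ≤ log (1 + x) := by
  rcases hx.eq_or_lt with rfl | hx
  · simp
  -- `log (1 + x) = 2 ∑ₙ (x / (2 + x)) ^ (2n+1) / (2n+1)` has nonnegative terms; keep the first
  have hsum := hasSum_log_one_add_inv (inv_pos.mpr hx)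
  rw [inv_inv] at hsum
  refine le_of_eq_of_le ?_ (le_hasSum hsum 0 fun n _ => by positivity)
  norm_num
  field_simp

theorem Real.exp_mul_le_one_add_mul {r : ℝ} (hr0 : 0 ≤ r) (hr1 : r ≤ 1) (s : ℝ) :
    exp (r * s) ≤ 1 + r * (exp s - 1) := by
  have h := convexOn_exp.2 (Set.mem_univ 0) (Set.mem_univ s) (sub_nonneg.mpr hr1) hr0
    (sub_add_cancel 1 r)
  simp only [smul_eq_mul, mul_zero, zero_add, exp_zero] at h
  linarith

theorem Real.add_le_mul_exp_div {k : ℝ} (hk : 0 < k) (c : ℝ) : k + c ≤ k * exp (c / k) :=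
  calc k + c = k * (c / k + 1) := by field_simp; ring
    _ ≤ k * exp (c / k) := by gcongr; exact add_one_le_exp _

theorem propOf_not {γ : Type*} [Fintype γ] [Nonempty γ] (p : γ → Prop) :
    propOf (fun x => ¬ p x) = 1 - propOf p := by
  classical
  have hcard : (0 : ℝ) < Fintype.card γ := by exact_mod_cast Fintype.card_pos
  rw [propOf, propOf, eq_sub_iff_add_eq, ← add_div, div_eq_one_iff_eq hcard.ne', add_comm]
  have hsplit := card_filter_add_card_filter_not (s := univ) p
  rw [card_univ] at hsplit
  norm_cast
  convert hsplit

theorem propOf_exists_le_sum {γ ι : Type*} [Fintype γ] [Fintype ι] (p : ι → γ → Prop) :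
    propOf (fun x => ∃ i, p i x) ≤ ∑ i, propOf (p i) := by
  classical
  simp only [propOf, ← sum_div]
  gcongr
  exact_mod_cast (card_le_card fun x hx => by simpa using hx).trans card_biUnion_le

theorem propOf_lt_le_exp_mul_sum_exp {γ : Type*} [Fintype γ] (g : γ → ℝ) (a : ℝ) {t : ℝ}
    (ht : 0 ≤ t) :
    propOf (fun x => a < g x) ≤ exp (-(t * a)) * (∑ x, exp (t * g x)) / Fintype.card γ := by
  classical
  rw [propOf, mul_sum]
  gcongr
  rw [card_eq_sum_ones, Nat.cast_sum]
  refine (sum_le_sum fun x hx => ?_).trans (sum_le_sum_of_subset_of_nonneg (filter_subset _ _)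
    fun x _ _ => by positivity)
  rw [← exp_add, Nat.cast_one, one_le_exp_iff]
  nlinarith [(mem_filter.mp hx).2]

theorem prod_exp_mul_add_sub_one_le {X : Type*} [Fintype X] {P : X → ℝ} (hP0 : ∀ x, 0 ≤ P x)
    (hPsum : ∑ x, P x ≤ 1) {q : ℝ} (hq : 0 < q) (hPq : ∀ x, P x ≤ q) {ε : ℝ} (hε : 0 ≤ ε)
    {k : ℝ} (hk : 1 ≤ k) :
    ∏ x, (exp (log (1 + ε) / q * P x) + (k - 1)) ≤
      k ^ Fintype.card X * exp (ε / (k * q)) := by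
  have hfactor : ∀ x, exp (log (1 + ε) / q * P x) + (k - 1) ≤
      k * exp (ε * (P x / q) / k) := by
    intro x
    have hr0 : 0 ≤ P x / q := div_nonneg (hP0 x) hq.le
    have hr1 : P x / q ≤ 1 := (div_le_one hq).mpr (hPq x)
    have hconv := exp_mul_le_one_add_mul hr0 hr1 (log (1 + ε))
    rw [exp_log (by linarith), add_sub_cancel_left] at hconv
    calc exp (log (1 + ε) / q * P x) + (k - 1) ≤ k + ε * (P x / q) := by
          rw [show log (1 + ε) / q * P x = P x / q * log (1 + ε) by ring]; linarith
      _ ≤ k * exp (ε * (P x / q) / k) := add_le_mul_exp_div (by linarith) _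
  calc ∏ x, (exp (log (1 + ε) / q * P x) + (k - 1))
      ≤ ∏ x, k * exp (ε * (P x / q) / k) :=
        prod_le_prod (fun x _ => add_nonneg (exp_pos _).le (sub_nonneg.2 hk))
          fun x _ => hfactor x
    _ = k ^ Fintype.card X * exp (ε * ((∑ x, P x) / q) / k) := by
        rw [prod_mul_distrib, prod_const, card_univ, ← exp_sum, ← sum_div, ← mul_sum,
          ← sum_div]
    _ ≤ k ^ Fintype.card X * exp (ε / (k * q)) := by
        gcongr _ * exp ?_
        calc ε * ((∑ x, P x) / q) / k ≤ ε * (1 / q) / k := by gcongr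
          _ = ε / (k * q) := by field_simp

section Coloring

variable {X Y : Type*} [Fintype X] [DecidableEq X] [Fintype Y] [DecidableEq Y]

def fiberMass (P : X → ℝ) (f : X → Y) (j : Y) : ℝ :=
  ∑ x ∈ univ.filter (fun x => f x = j), P x

theorem sum_exp_mul_fiberMass (P : X → ℝ) (j : Y) (t : ℝ) :
    ∑ f : X → Y, exp (t * fiberMass P f j) =
      ∏ x, (exp (t * P x) + (Fintype.card Y - 1)) := by
  have hcoord : ∀ x, ∑ y : Y, exp (t * if y = j then P x else 0) =
      exp (t * P x) + (Fintype.card Y - 1) := by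
    intro x
    have hterm : ∀ y : Y, exp (t * if y = j then P x else 0) =
        (if y = j then exp (t * P x) - 1 else 0) + 1 := by
      intro y; split_ifs <;> simp
    simp only [hterm, sum_add_distrib, sum_ite_eq', mem_univ, if_true, sum_const, card_univ,
      nsmul_eq_mul, mul_one]
    ring
  simp only [← hcoord, Fintype.prod_sum, fiberMass, sum_filter, mul_sum, exp_sum]

theorem propOf_lt_fiberMass_le [Nonempty Y] {P : X → ℝ} (hP0 : ∀ x, 0 ≤ P x)
    (hPsum : ∑ x, P x ≤ 1) {q : ℝ} (hq : 0 < q) (hPq : ∀ x, P x ≤ q) {ε : ℝ} (hε : 0 < ε)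
    (j : Y) :
    propOf (fun f : X → Y => (1 + ε) / Fintype.card Y < fiberMass P f j) ≤
      exp (-(ε / (2 * Fintype.card Y * q)) * log (1 + ε)) := by
  set k : ℝ := (Fintype.card Y : ℝ)
  set L := log (1 + ε)
  have hk : 1 ≤ k := Nat.one_le_cast.mpr Fintype.card_pos
  have hL : 0 < L := log_pos (by linarith)
  have hkey : 2 * ε ≤ (2 + ε) * L := by
    have := two_mul_div_two_add_le_log_one_add hε.le
    rw [div_le_iff₀ (by linarith)] at this
    linarith
  calc propOf (fun f : X → Y => (1 + ε) / k < fiberMass P f j)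
      ≤ exp (-(L / q * ((1 + ε) / k))) * (∑ f : X → Y, exp (L / q * fiberMass P f j)) /
          Fintype.card (X → Y) := propOf_lt_le_exp_mul_sum_exp _ _ (by positivity)
    _ ≤ exp (-(L / q * ((1 + ε) / k))) * (k ^ Fintype.card X * exp (ε / (k * q))) /
          k ^ Fintype.card X := by
        rw [sum_exp_mul_fiberMass, Fintype.card_fun, Nat.cast_pow]
        gcongr
        exact prod_exp_mul_add_sub_one_le hP0 hPsum hq hPq hε.le hk
    _ = exp ((ε - (1 + ε) * L) / (k * q)) := by
        rw [mul_div_assoc, mul_div_cancel_left₀ _ (by positivity), ← exp_add]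
        congr 1
        field_simp
        ring
    _ ≤ exp (-(ε / (2 * k * q)) * L) := by
        rw [exp_le_exp, show -(ε / (2 * k * q)) * L = -(ε * L / 2) / (k * q) by ring]
        gcongr
        linarith

end Coloring

open Classical in
theorem stmt12 {X : Type*} [Fintype X] [Nonempty X] (P : X → ℝ)
    (hP0 : ∀ x, 0 ≤ P x) (hPsub : ∑ x, P x ≤ 1)
    (k : ℕ) (hk : 1 ≤ k) (ε : ℝ) (hε : 0 < ε)
    (q : ℝ) (hq : q = Finset.univ.sup' Finset.univ_nonempty P) :
    1 - k * Real.exp (-(ε / (2 * k * q)) * Real.log (1 + ε)) ≤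
      propOf (fun f : X → Fin k =>
        ∀ j : Fin k, ∑ x ∈ Finset.univ.filter (fun x => f x = j), P x ≤ (1 + ε) / k) := by
  have hPq : ∀ x, P x ≤ q := fun x => hq ▸ le_sup' P (mem_univ x)
  have : Nonempty (Fin k) := ⟨⟨0, hk⟩⟩
  rcases ((hP0 (Classical.arbitrary X)).trans (hPq _)).eq_or_lt with rfl | hq0
  · -- `ε / (2 * k * 0) = 0`, so the bound reads `1 - k ≤ propOf _`
    have hk' : (1 : ℝ) ≤ k := by exact_mod_cast hk
    simp only [mul_zero, div_zero, neg_zero, zero_mul, exp_zero, mul_one]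
    exact (sub_nonpos.mpr hk').trans (by unfold propOf; positivity)
  calc 1 - k * exp (-(ε / (2 * k * q)) * log (1 + ε))
      ≤ 1 - ∑ j : Fin k, propOf (fun f : X → Fin k => (1 + ε) / k < fiberMass P f j) := by
        gcongr
        calc ∑ j : Fin k, propOf (fun f : X → Fin k => (1 + ε) / k < fiberMass P f j)
            ≤ ∑ _j : Fin k, exp (-(ε / (2 * k * q)) * log (1 + ε)) :=
              sum_le_sum fun j _ => by
                simpa only [Fintype.card_fin] using propOf_lt_fiberMass_le hP0 hPsub hq0 hPq hε j
          _ = k * exp (-(ε / (2 * k * q)) * log (1 + ε)) := by simp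
    _ ≤ 1 - propOf (fun f : X → Fin k => ∃ j, (1 + ε) / k < fiberMass P f j) :=
        sub_le_sub_left (propOf_exists_le_sum _) 1
    _ = propOf (fun f : X → Fin k =>
          ∀ j : Fin k, ∑ x ∈ Finset.univ.filter (fun x => f x = j), P x ≤ (1 + ε) / k) := by
        simp only [← propOf_not, not_exists, not_lt, fiberMass]
end
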